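/- arXiv:1901.02938 — 2 statements merged into one kernel-verified Lean document; each statement's English description precedes it below -/
import Mathlib

section
/- For all skew polynomials F, G ∈ F_{q^r}[x; σ], every a ∈ F_{q^r}, and the ordered basis β of F_{q^r} over F_q, the evaluation satisfies (FG)^{D_a}(β) = F^{D_a}(β) ⋆ G^{D_a}(β), where for a skew polynomial H, H^{D_a}(β) denotes the vector (H^{D_a}(β_1),…,H^{D_a}(β_r)). -/
/-
Since `(x + y)^q = x^q + y^q` and `c^q = c` for `c ∈ F_q`, each `H^{D_a} = ∑ H_i N_i(a) σ^i` is an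
`F_q`-linear endomorphism of `F_{q^r}`, and the cocycle identity `N_{i+j}(a) = N_i(a) σ^i(N_j(a))`
makes `H ↦ H^{D_a}` multiplicative: `(FG)^{D_a} = F^{D_a} ∘ G^{D_a}`. The matrix `M_β` of the vector
`H^{D_a}(β)` is the matrix of `H^{D_a}` in the basis `β`, so `⋆` is composition.
-/

/-- The i-th norm N_i(a) = σ^{i-1}(a)⋯σ(a)·a, where σ(x) = x^q. -/
noncomputable def Nnorm {K : Type*} [Field K] (q : ℕ) (a : K) (i : ℕ) : K :=
  ∏ j ∈ Finset.range i, a ^ q ^ j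

/-- Multiplication in the skew polynomial ring F_{q^r}[x;σ] with σ(β) = β^q. -/
noncomputable def skewMul {K : Type*} [Field K] (q : ℕ) (F G : Polynomial K) : Polynomial K :=
  ∑ i ∈ F.support, ∑ j ∈ G.support,
    Polynomial.C (F.coeff i * G.coeff j ^ q ^ i) * Polynomial.X ^ (i + j)

/-- The evaluation operator F^{D_a} = Σ F_i D_a^i, where D_a^i(x) = σ^i(x)·N_i(a). -/
noncomputable def evalD {K : Type*} [Field K] (q : ℕ) (a : K) (F : Polynomial K) (x : K) : K :=
  ∑ i ∈ F.support, F.coeff i * (x ^ q ^ i * Nnorm q a i)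

/-- The matrix-representation map M_β with respect to an ordered basis β. -/
noncomputable def Mmat {Fq F : Type*} [Field Fq] [Field F] [Algebra Fq F] {r : ℕ}
    (b : Module.Basis (Fin r) Fq F) (x : Fin r → F) : Matrix (Fin r) (Fin r) Fq :=
  Matrix.of fun i j => b.repr (x j) i

/-- The matrix product x ⋆ y = M_β^{-1}(M_β(x)·M_β(y)) on F_{q^r}^r. -/
noncomputable def starProd {Fq F : Type*} [Field Fq] [Field F] [Algebra Fq F] {r : ℕ}
    (b : Module.Basis (Fin r) Fq F) (x y : Fin r → F) : Fin r → F :=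
  Function.invFun (Mmat b) (Mmat b x * Mmat b y)

open Polynomial

section SkewEvaluation

variable {K : Type*} [Field K]

lemma Nnorm_add (q : ℕ) (a : K) (i j : ℕ) :
    Nnorm q a (i + j) = Nnorm q a i * Nnorm q a j ^ q ^ i := by
  simp only [Nnorm, Finset.prod_range_add, ← Finset.prod_pow, ← pow_mul, ← pow_add]
  exact congrArg _ (Finset.prod_congr rfl fun t _ => by rw [add_comm t])

lemma evalD_eq_lsum (q : ℕ) (a : K) (H : K[X]) (x : K) :
    evalD q a H x = lsum (fun i => LinearMap.mulRight K (x ^ q ^ i * Nnorm q a i)) H := rfl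

lemma evalD_C_mul_X_pow (q : ℕ) (a c x : K) (m : ℕ) :
    evalD q a (C c * X ^ m) x = c * (x ^ q ^ m * Nnorm q a m) := by
  rw [evalD_eq_lsum, C_mul_X_pow_eq_monomial, lsum_apply, sum_monomial_index] <;> simp [mul_assoc]

lemma evalD_skewMul {p n q : ℕ} [ExpChar K p] (hq : q = p ^ n) (a x : K) (P Q : K[X]) :
    evalD q a (skewMul q P Q) x = evalD q a P (evalD q a Q x) := by
  have frob_sum (s : Finset ℕ) (f : ℕ → K) (i : ℕ) :
      (∑ j ∈ s, f j) ^ q ^ i = ∑ j ∈ s, f j ^ q ^ i := by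
    rw [hq, ← pow_mul]
    exact map_sum (iterateFrobenius K p (n * i)) f s
  rw [skewMul, evalD_eq_lsum, map_sum]
  simp_rw [map_sum, ← evalD_eq_lsum, evalD_C_mul_X_pow, evalD, frob_sum, Finset.sum_mul,
    Finset.mul_sum]
  refine Finset.sum_congr rfl fun i _ => Finset.sum_congr rfl fun j _ => ?_
  rw [Nnorm_add, mul_pow, mul_pow, ← pow_mul, ← pow_add, add_comm j i]
  ring

end SkewEvaluation

section FiniteField

variable (Fq : Type*) {F : Type*} [Field Fq] [Fintype Fq] [Field F] [Algebra Fq F]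

lemma frobeniusAlgHom_pow_apply (i : ℕ) (x : F) :
    (FiniteField.frobeniusAlgHom Fq F ^ i) x = x ^ Fintype.card Fq ^ i := by
  rw [AlgHom.coe_pow, FiniteField.coe_frobeniusAlgHom, pow_iterate]

noncomputable def evalDLinearMap (a : F) (H : F[X]) : F →ₗ[Fq] F :=
  ∑ i ∈ H.support, (H.coeff i * Nnorm (Fintype.card Fq) a i) •
    (FiniteField.frobeniusAlgHom Fq F ^ i).toLinearMap

lemma evalDLinearMap_apply (a : F) (H : F[X]) (x : F) :
    evalDLinearMap Fq a H x = evalD (Fintype.card Fq) a H x := by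
  simp only [evalDLinearMap, evalD, LinearMap.sum_apply, LinearMap.smul_apply,
    AlgHom.toLinearMap_apply, frobeniusAlgHom_pow_apply, smul_eq_mul]
  exact Finset.sum_congr rfl fun i _ => by ring

end FiniteField

section MatrixRepresentation

variable {Fq F : Type*} [Field Fq] [Field F] [Algebra Fq F] {r : ℕ}
  (b : Module.Basis (Fin r) Fq F)

lemma Mmat_injective : Function.Injective (Mmat b) := fun _ _ h =>
  funext fun j => b.repr.injective <| Finsupp.ext fun i => congrFun (congrFun h i) j

lemma Mmat_comp_basis (f : F →ₗ[Fq] F) :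
    Mmat b (fun i => f (b i)) = LinearMap.toMatrix b b f := by
  ext i j
  simp [Mmat, LinearMap.toMatrix_apply]

lemma starProd_comp_basis (f g : F →ₗ[Fq] F) :
    starProd b (fun i => f (b i)) (fun i => g (b i)) = fun i => f (g (b i)) := by
  have hcomp : Mmat b (fun i => f (g (b i))) =
      Mmat b (fun i => f (b i)) * Mmat b (fun i => g (b i)) := by
    simp only [← LinearMap.comp_apply, Mmat_comp_basis]
    exact LinearMap.toMatrix_comp b b b f g
  rw [starProd, ← hcomp, Function.leftInverse_invFun (Mmat_injective b)]

end MatrixRepresentation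

theorem stmt12_general (q r : ℕ) (Fq F : Type*) [Field Fq] [Fintype Fq]
    [Field F] [Algebra Fq F]
    (hq : Fintype.card Fq = q)
    (b : Module.Basis (Fin r) Fq F) (a : F) (P Q : Polynomial F) :
    (fun i => evalD q a (skewMul q P Q) (b i)) =
      starProd b (fun i => evalD q a P (b i)) (fun i => evalD q a Q (b i)) := by
  obtain ⟨p, _, n, hp, hcard⟩ := FiniteField.card' Fq
  have : CharP F p := charP_of_injective_algebraMap' Fq p
  have : ExpChar F p := .prime hp
  subst hq
  have hcomp (x : F) : evalD (Fintype.card Fq) a (skewMul (Fintype.card Fq) P Q) x =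
      evalDLinearMap Fq a P (evalDLinearMap Fq a Q x) := by
    simp only [evalDLinearMap_apply, evalD_skewMul hcard]
  simp only [hcomp, ← evalDLinearMap_apply, starProd_comp_basis]

/-- (FG)^{D_a}(β) = F^{D_a}(β) ⋆ G^{D_a}(β). -/
theorem stmt12 (q r : ℕ) (hr : 1 ≤ r) (Fq F : Type*) [Field Fq] [Fintype Fq]
    [Field F] [Fintype F] [Algebra Fq F]
    (hq : Fintype.card Fq = q) (hF : Fintype.card F = q ^ r)
    (b : Module.Basis (Fin r) Fq F) (a : F) (P Q : Polynomial F) :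
    (fun i => evalD q a (skewMul q P Q) (b i)) =
      starProd b (fun i => evalD q a P (b i)) (fun i => evalD q a Q (b i)) :=
  stmt12_general q r Fq F hq b a P Q
end

section
/- With a = (γ^0,…,γ^{g-1}) for a primitive element γ of F_{q^r} and q > g, and β an ordered basis of F_{q^r} over F_q, the linearized Reed-Solomon code C_{N,k}(a,β) ⊆ F_{q^r}^N with N = gr is an MDS code: it is F_{q^r}-linear of dimension k and has minimum Hamming distance N - k + 1. -/
/-- The coordinate-wise (block-wise) matrix product on F_{q^r}^{gr}. -/
noncomputable def cstar {Fq F : Type*} [Field Fq] [Field F] [Algebra Fq F] {r g : ℕ}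
    (b : Module.Basis (Fin r) Fq F) (x y : Fin g × Fin r → F) : Fin g × Fin r → F :=
  fun p => starProd b (fun i => x (p.1, i)) (fun i => y (p.1, i)) p.2

/-- The total evaluation vector F^{D_a}(β), concatenating the g blocks
(F^{D_{a_j}}(β_1),…,F^{D_{a_j}}(β_r)). -/
noncomputable def totalEval {Fq F : Type*} [Field Fq] [Field F] [Algebra Fq F] {r g : ℕ}
    (q : ℕ) (b : Module.Basis (Fin r) Fq F) (a : Fin g → F) (P : Polynomial F) :
    Fin g × Fin r → F :=
  fun p => evalD q (a p.1) P (b p.2)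

/-- The (N,k) linearized Reed-Solomon code: total evaluation vectors of skew
polynomials of degree < k (or zero). -/
noncomputable def CodeLRS {Fq F : Type*} [Field Fq] [Field F] [Algebra Fq F] {r g : ℕ}
    (q : ℕ) (b : Module.Basis (Fin r) Fq F) (a : Fin g → F) (k : ℕ) :
    Set (Fin g × Fin r → F) :=
  {w | ∃ P : Polynomial F, P ∈ Polynomial.degreeLT F k ∧ w = totalEval q b a P}

/-- Hamming weight of a vector. -/
noncomputable def wtv {ι F : Type*} [Zero F] (w : ι → F) : ℕ :=
  Set.ncard {i | w i ≠ 0}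

/-!
Evaluating a skew polynomial `P` at the operator `D_a` gives an `F_q`-linear map `P^{D_a}` of `F`.
A zero of the codeword of `P` in block `j` is a basis vector `β_i` in the kernel of `P^{D_{a_j}}`,
so there are at most `∑ j, dim ker P^{D_{a_j}}` zeros, and this sum is at most `deg P` when the
`a_j` are nonzero and pairwise non-conjugate under `a ↦ σ(x) a x⁻¹`: every root splits off a right
factor `x - c` of `P`, and the kernels of `x - c` have total dimension at most one. The powers
`γ^j`, `j < q - 1`, are pairwise non-conjugate because the `(q - 1)`-th powers form the subgroup
of index `q - 1` of the cyclic group `Fˣ`. Hence nonzero codewords have weight at least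
`N - k + 1`, evaluation is injective in degree `< k`, and a nonzero codeword vanishing on any
`k - 1` coordinates, which exists by counting dimensions, attains the bound.
-/

open Polynomial Module

theorem LinearMap.finrank_ker_comp_le {K V W U : Type*} [DivisionRing K] [AddCommGroup V]
    [Module K V] [AddCommGroup W] [Module K W] [AddCommGroup U] [Module K U]
    [FiniteDimensional K V] [FiniteDimensional K W] (f : W →ₗ[K] U) (g : V →ₗ[K] W) :
    finrank K (ker (f ∘ₗ g)) ≤ finrank K (ker f) + finrank K (ker g) := by
  set h := g.domRestrict (ker (f ∘ₗ g))
  have hrange : finrank K (range h) ≤ finrank K (ker f) :=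
    Submodule.finrank_mono (by rintro _ ⟨x, rfl⟩; exact x.2)
  have hker : finrank K (ker h) ≤ finrank K (ker g) := by
    rw [ker_domRestrict, ← Submodule.finrank_map_subtype_eq, Submodule.map_comap_subtype]
    exact Submodule.finrank_mono inf_le_right
  have := h.finrank_range_add_finrank_ker
  omega

theorem LinearIndependent.ncard_setOf_mem_le_finrank {K V ι : Type*} [DivisionRing K]
    [AddCommGroup V] [Module K V] {b : ι → V} (hb : LinearIndependent K b) (W : Submodule K V)
    [FiniteDimensional K W] : {i | b i ∈ W}.ncard ≤ finrank K W := by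
  have hW : LinearIndependent K fun i : {i | b i ∈ W} => (⟨b i, i.2⟩ : W) :=
    .of_comp W.subtype (hb.comp _ Subtype.val_injective)
  have := hW.finite
  have := Fintype.ofFinite {i | b i ∈ W}
  rw [← Nat.card_coe_set_eq, Nat.card_eq_fintype_card]
  exact hW.fintype_card_le_finrank

theorem LinearIndependent.ncard_setOf_apply_eq_zero_le {K V U ι κ : Type*} [DivisionRing K]
    [AddCommGroup V] [Module K V] [AddCommGroup U] [Module K U] [FiniteDimensional K V]
    [Fintype κ] {b : ι → V} (hb : LinearIndependent K b) (f : κ → V →ₗ[K] U) :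
    {p : κ × ι | f p.1 (b p.2) = 0}.ncard ≤ ∑ j, finrank K (LinearMap.ker (f j)) := by
  have hunion : {p : κ × ι | f p.1 (b p.2) = 0} =
      ⋃ j ∈ Finset.univ, Prod.mk j '' {i | b i ∈ LinearMap.ker (f j)} := by
    ext ⟨j, i⟩
    simp
  rw [hunion]
  refine (Finset.set_ncard_biUnion_le _ _).trans (Finset.sum_le_sum fun j _ => ?_)
  rw [Set.ncard_image_of_injective _ (Prod.mk_right_injective j)]
  exact hb.ncard_setOf_mem_le_finrank _

theorem wtv_add_ncard_setOf_eq_zero {ι F : Type*} [Finite ι] [Zero F] (w : ι → F) :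
    wtv w + {i | w i = 0}.ncard = Nat.card ι := by
  rw [wtv, add_comm, ← Set.compl_ofPred]
  exact Set.ncard_add_ncard_compl _

theorem Submodule.exists_ne_zero_wtv_add_finrank_le {ι F : Type*} [Fintype ι] [Field F]
    (S : Submodule F (ι → F)) (hS : 0 < finrank F S) :
    ∃ w ∈ S, w ≠ 0 ∧ wtv w + finrank F S ≤ Fintype.card ι + 1 := by
  have hk : finrank F S ≤ Fintype.card ι :=
    (finrank_fintype_fun_eq_card (η := ι) F) ▸ S.finrank_le
  obtain ⟨T, -, hT⟩ := Finset.exists_subset_card_eq (s := (Finset.univ : Finset ι))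
    (n := finrank F S - 1) (by rw [Finset.card_univ]; omega)
  set π := (LinearMap.funLeft F F (Subtype.val : T → ι)).domRestrict S
  have hker : LinearMap.ker π ≠ ⊥ := LinearMap.ker_ne_bot_of_finrank_lt (by simp [hT]; omega)
  obtain ⟨w, hw, hw0⟩ := Submodule.exists_mem_ne_zero_of_ne_bot hker
  have hzeros : finrank F S - 1 ≤ {i | (w : ι → F) i = 0}.ncard := by
    rw [← hT, ← Set.ncard_coe_finset]
    exact Set.ncard_le_ncard fun i hi => congr_fun hw ⟨i, hi⟩
  have := wtv_add_ncard_setOf_eq_zero (w : ι → F)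
  rw [Nat.card_eq_fintype_card] at this
  exact ⟨w, w.2, by simpa using hw0, by omega⟩

namespace LinearizedRS

section Frobenius

variable {Fq F : Type*} [Field Fq] [Fintype Fq] [Field F] [Algebra Fq F]

local notation "q" => Fintype.card Fq

theorem frobeniusAlgHom_pow_apply (n : ℕ) (x : F) :
    (FiniteField.frobeniusAlgHom Fq F ^ n) x = x ^ q ^ n := by
  rw [AlgHom.coe_pow, FiniteField.coe_frobeniusAlgHom, pow_iterate]

theorem add_pow_card_pow (n : ℕ) (x y : F) : (x + y) ^ q ^ n = x ^ q ^ n + y ^ q ^ n := by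
  simp only [← frobeniusAlgHom_pow_apply (Fq := Fq), map_add]

theorem sub_pow_card_pow (n : ℕ) (x y : F) : (x - y) ^ q ^ n = x ^ q ^ n - y ^ q ^ n := by
  simp only [← frobeniusAlgHom_pow_apply (Fq := Fq), map_sub]

theorem smul_pow_card_pow (n : ℕ) (c : Fq) (x : F) : (c • x) ^ q ^ n = c • x ^ q ^ n := by
  simp only [← frobeniusAlgHom_pow_apply (Fq := Fq), map_smul]

end Frobenius

section Evaluation

variable {F : Type*} [Field F] (q : ℕ)

theorem Nnorm_zero (a : F) : Nnorm q a 0 = 1 := Finset.prod_range_zero _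

theorem Nnorm_succ (a : F) (n : ℕ) : Nnorm q a (n + 1) = Nnorm q a n * a ^ q ^ n :=
  Finset.prod_range_succ _ _

noncomputable def evalDLinear (a x : F) : F[X] →ₗ[F] F :=
  lsum fun n => LinearMap.mulRight F (x ^ q ^ n * Nnorm q a n)

theorem evalDLinear_apply (a x : F) (P : F[X]) : evalDLinear q a x P = evalD q a P x := rfl

theorem evalD_add (a x : F) (P Q : F[X]) : evalD q a (P + Q) x = evalD q a P x + evalD q a Q x :=
  map_add (evalDLinear q a x) P Q

theorem evalD_sub (a x : F) (P Q : F[X]) : evalD q a (P - Q) x = evalD q a P x - evalD q a Q x :=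
  map_sub (evalDLinear q a x) P Q

theorem evalD_monomial (a x : F) (n : ℕ) (c : F) :
    evalD q a (monomial n c) x = c * (x ^ q ^ n * Nnorm q a n) :=
  sum_monomial_index (f := fun n c => c * (x ^ q ^ n * Nnorm q a n)) c (zero_mul _)

theorem evalD_C (a x c : F) : evalD q a (C c) x = c * x := by
  simp [← monomial_zero_left, evalD_monomial, Nnorm_zero]

theorem evalD_zero_right (hq : q ≠ 0) (a : F) (P : F[X]) : evalD q a P 0 = 0 := by
  simp [evalD, zero_pow (pow_ne_zero _ hq)]

/-- `a * x ^ (q - 1) = σ x * a * x⁻¹` for `σ x = x ^ q`, so this says that the `a j` are pairwise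
not σ-conjugate. -/
def PairwiseNonconjugate {ι : Type*} (a : ι → F) : Prop :=
  Pairwise fun j j' => ∀ x y : F, x ≠ 0 → y ≠ 0 → a j * x ^ (q - 1) ≠ a j' * y ^ (q - 1)

theorem evalD_X_sub_C (a c x : F) : evalD q a (X - C c) x = x ^ q * a - c * x := by
  rw [evalD_sub, evalD_C, ← monomial_one_one_eq_X, evalD_monomial, ← zero_add 1, Nnorm_succ,
    Nnorm_zero]
  ring

end Evaluation

section Division

variable (Fq : Type*) {F : Type*} [Field Fq] [Fintype Fq] [Field F] [Algebra Fq F]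

local notation "q" => Fintype.card Fq

/-- In the skew polynomial ring, `p x^(n+1) = (p x^n) (x - c) + p c^(q^n) x^n`. -/
theorem evalD_monomial_succ (c a x : F) (n : ℕ) (p : F) :
    evalD q a (monomial (n + 1) p) x =
      evalD q a (monomial n p) (x ^ q * a - c * x) + evalD q a (monomial n (p * c ^ q ^ n)) x := by
  simp only [evalD_monomial, Nnorm_succ, sub_pow_card_pow, mul_pow, ← pow_mul, ← pow_succ']
  ring

theorem exists_evalD_eq_evalD_monomial_comp_add (c : F) (n : ℕ) (P : F[X])
    (hP : P.natDegree ≤ n + 1) :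
    ∃ P' : F[X], P'.natDegree ≤ n ∧ ∀ a x : F,
      evalD q a P x = evalD q a (monomial n (P.coeff (n + 1))) (x ^ q * a - c * x) +
        evalD q a P' x := by
  set p := P.coeff (n + 1)
  refine ⟨P - monomial (n + 1) p + monomial n (p * c ^ q ^ n), ?_, fun a x => ?_⟩
  · refine natDegree_le_iff_coeff_eq_zero.2 fun m hm => ?_
    rcases eq_or_lt_of_le (Nat.succ_le_of_lt hm) with rfl | hm'
    · simp [p, coeff_monomial]
    · simp [coeff_monomial, hm.ne, hm'.ne, coeff_eq_zero_of_natDegree_lt (hP.trans_lt hm')]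
  · simp only [evalD_add, evalD_sub, evalD_monomial_succ Fq c]
    ring

/-- Right division by `x - c` in the skew polynomial ring, read through the evaluation maps:
`P = Q (x - c) + R` with `deg Q = deg P - 1`. -/
theorem exists_evalD_eq_evalD_comp_add (c : F) (n : ℕ) (P : F[X]) (hP : P.natDegree ≤ n + 1) :
    ∃ Q : F[X], Q.natDegree ≤ n ∧ Q.coeff n = P.coeff (n + 1) ∧ ∃ R : F,
      ∀ a x : F, evalD q a P x = evalD q a Q (x ^ q * a - c * x) + R * x := by
  obtain ⟨P', hP', hsplit⟩ := exists_evalD_eq_evalD_monomial_comp_add Fq c n P hP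
  induction n generalizing P P' with
  | zero =>
    refine ⟨C (P.coeff 1), natDegree_C _ |>.le, coeff_C_zero, P'.coeff 0, fun a x => ?_⟩
    rw [hsplit, eq_C_of_natDegree_le_zero hP', evalD_C, coeff_C_zero, ← monomial_zero_left]
  | succ n ih =>
    obtain ⟨P'', hP'', hsplit'⟩ := exists_evalD_eq_evalD_monomial_comp_add Fq c n P' hP'
    obtain ⟨Q, hQ, -, R, hR⟩ := ih P' hP' P'' hP'' hsplit'
    refine ⟨monomial (n + 1) (P.coeff (n + 2)) + Q, ?_, ?_, R, fun a x => ?_⟩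
    · exact natDegree_add_le_of_degree_le (natDegree_monomial_le _) (hQ.trans n.le_succ)
    · simp [coeff_eq_zero_of_natDegree_lt (hQ.trans_lt n.lt_succ_self)]
    · rw [hsplit, hR, evalD_add]
      ring

end Division

section Kernel

variable {Fq F : Type*} [Field Fq] [Fintype Fq] [Field F] [Algebra Fq F]

local notation "q" => Fintype.card Fq

theorem card_pow_finrank_le_natDegree [Finite F] (K : Submodule Fq F) {p : F[X]} (hp : p ≠ 0)
    (hK : ∀ x ∈ K, p.IsRoot x) : q ^ finrank Fq K ≤ p.natDegree := by
  rw [← Nat.card_eq_fintype_card, ← Module.natCard_eq_pow_finrank]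
  change Nat.card (K : Set F) ≤ _
  rw [Nat.card_coe_set_eq]
  refine le_trans (Set.ncard_le_ncard (fun x hx => ?_)) (ncard_rootSet_le p F)
  simpa [mem_rootSet, hp] using hK x hx

variable (Fq) in
noncomputable def evalDOp (a : F) (P : F[X]) : F →ₗ[Fq] F where
  toFun := evalD q a P
  map_add' x y := by
    simp only [evalD, add_pow_card_pow, add_mul, mul_add, Finset.sum_add_distrib]
  map_smul' c x := by
    simp only [evalD, smul_pow_card_pow, smul_mul_assoc, mul_smul_comm, Finset.smul_sum,
      RingHom.id_apply]

theorem evalDOp_apply (a : F) (P : F[X]) (x : F) : evalDOp Fq a P x = evalD q a P x := rfl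

theorem finrank_ker_evalDOp_X_sub_C_le_one [Finite F] {a : F} (ha : a ≠ 0) (c : F) :
    finrank Fq (LinearMap.ker (evalDOp Fq a (X - C c))) ≤ 1 := by
  have hq : 1 < q := Fintype.one_lt_card
  have hdeg : (C a * X ^ q - C c * X).natDegree = q := by
    rw [natDegree_sub_eq_left_of_natDegree_lt] <;> simp [ha]
    exact (natDegree_C_mul_le c X).trans_lt (by simpa using hq)
  have hK : q ^ finrank Fq (LinearMap.ker (evalDOp Fq a (X - C c))) ≤ q ^ 1 := by
    refine (card_pow_finrank_le_natDegree _ (p := C a * X ^ q - C c * X) ?_ fun x hx => ?_).trans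
      (by rw [hdeg, pow_one])
    · exact ne_zero_of_natDegree_gt (hdeg ▸ hq)
    · rw [LinearMap.mem_ker, evalDOp_apply, evalD_X_sub_C] at hx
      simp only [IsRoot, eval_sub, eval_mul, eval_C, eval_pow, eval_X]
      linear_combination hx
  exact (Nat.pow_le_pow_iff_right hq).1 hK

theorem ker_evalDOp_X_sub_C_eq_bot {a c : F} (h : ∀ x : F, x ≠ 0 → a * x ^ (q - 1) ≠ c) :
    LinearMap.ker (evalDOp Fq a (X - C c)) = ⊥ := by
  refine eq_bot_iff.2 fun x hx => ?_
  rw [LinearMap.mem_ker, evalDOp_apply, evalD_X_sub_C, ← pow_sub_one_mul Fintype.card_ne_zero]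
    at hx
  by_contra hx0
  exact h x hx0 (mul_right_cancel₀ hx0 (by linear_combination hx))

theorem sum_finrank_ker_evalDOp_X_sub_C_le_one [Finite F] {ι : Type*} [Fintype ι] {a : ι → F}
    (ha : ∀ j, a j ≠ 0)
    (hconj : PairwiseNonconjugate q a)
    (j₀ : ι) {x₀ : F} (hx₀ : x₀ ≠ 0) :
    ∑ j, finrank Fq (LinearMap.ker (evalDOp Fq (a j) (X - C (a j₀ * x₀ ^ (q - 1))))) ≤ 1 := by
  rw [Finset.sum_eq_single j₀ (fun j _ hj => ?_) (by simp)]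
  · exact finrank_ker_evalDOp_X_sub_C_le_one (ha j₀) _
  · rw [ker_evalDOp_X_sub_C_eq_bot fun x hx => hconj hj x x₀ hx hx₀, finrank_bot]

theorem exists_evalDOp_eq_comp_of_root {n : ℕ} {P : F[X]} (hP : P.natDegree = n + 1)
    {a₀ x₀ : F} (hx₀ : x₀ ≠ 0) (hroot : evalD q a₀ P x₀ = 0) :
    ∃ Q : F[X], Q ≠ 0 ∧ Q.natDegree = n ∧ ∀ a : F,
      evalDOp Fq a P = evalDOp Fq a Q ∘ₗ evalDOp Fq a (X - C (a₀ * x₀ ^ (q - 1))) := by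
  obtain ⟨Q, hQ, hcoeff, R, hR⟩ :=
    exists_evalD_eq_evalD_comp_add Fq (a₀ * x₀ ^ (q - 1)) n P hP.le
  have hR0 : R = 0 := by
    have h := hR a₀ x₀
    rw [hroot, mul_assoc, pow_sub_one_mul Fintype.card_ne_zero, mul_comm, sub_self,
      evalD_zero_right _ Fintype.card_ne_zero, zero_add, eq_comm] at h
    exact (mul_eq_zero.1 h).resolve_right hx₀
  have hQn : Q.coeff n ≠ 0 := by
    rw [hcoeff, ← hP]
    exact leadingCoeff_ne_zero.2 (ne_zero_of_natDegree_gt (n := n) (by omega))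
  refine ⟨Q, fun h => hQn (by simp [h]), natDegree_eq_of_le_of_coeff_ne_zero hQ hQn,
    fun a => LinearMap.ext fun x => ?_⟩
  rw [LinearMap.comp_apply, evalDOp_apply, evalDOp_apply, evalDOp_apply, evalD_X_sub_C, hR,
    hR0, zero_mul, add_zero]

/-- A root `x₀ ≠ 0` of some `P^{D_{a j₀}}` splits off the right factor `x - c`,
`c = a j₀ * x₀ ^ (q - 1)`, whose kernels have total dimension at most one since `c` is conjugate
to `a j₀` only. -/
theorem sum_finrank_ker_evalDOp_le [Finite F] {ι : Type*} [Fintype ι] {a : ι → F}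
    (ha : ∀ j, a j ≠ 0)
    (hconj : PairwiseNonconjugate q a)
    {P : F[X]} (hP : P ≠ 0) :
    ∑ j, finrank Fq (LinearMap.ker (evalDOp Fq (a j) P)) ≤ P.natDegree := by
  induction hd : P.natDegree using Nat.strong_induction_on generalizing P with
  | _ n ih =>
  by_cases hroot : ∃ j, ∃ x ≠ 0, evalD q (a j) P x = 0
  · obtain ⟨j₀, x₀, hx₀, hj₀⟩ := hroot
    obtain ⟨m, rfl⟩ : ∃ m, n = m + 1 := Nat.exists_eq_succ_of_ne_zero fun hn => by
      rw [eq_C_of_natDegree_le_zero (hd.trans hn).le, evalD_C] at hj₀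
      exact hP (leadingCoeff_eq_zero.1 (by simpa [leadingCoeff, hd, hn, hx₀] using hj₀))
    obtain ⟨Q, hQ0, hQ, hfac⟩ := exists_evalDOp_eq_comp_of_root hd hx₀ hj₀
    calc ∑ j, finrank Fq (LinearMap.ker (evalDOp Fq (a j) P))
        ≤ ∑ j, (finrank Fq (LinearMap.ker (evalDOp Fq (a j) Q)) +
            finrank Fq (LinearMap.ker (evalDOp Fq (a j) (X - C (a j₀ * x₀ ^ (q - 1)))))) :=
          Finset.sum_le_sum fun j _ => hfac (a j) ▸ LinearMap.finrank_ker_comp_le _ _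
      _ ≤ m + 1 := by
          rw [Finset.sum_add_distrib]
          exact add_le_add (ih m m.lt_succ_self hQ0 hQ)
            (sum_finrank_ker_evalDOp_X_sub_C_le_one ha hconj j₀ hx₀)
  · push Not at hroot
    have hker : ∀ j, LinearMap.ker (evalDOp Fq (a j) P) = ⊥ := fun j =>
      eq_bot_iff.2 fun x hx => by_contra fun hx0 => hroot j x hx0 hx
    rw [Finset.sum_eq_zero fun j _ => by rw [hker j, finrank_bot]]
    exact n.zero_le

end Kernel

section Code

variable {Fq F : Type*} [Field Fq] [Fintype Fq] [Field F] [Algebra Fq F] {r g : ℕ}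

local notation "q" => Fintype.card Fq

noncomputable def totalEvalLinear (b : Basis (Fin r) Fq F) (a : Fin g → F) :
    F[X] →ₗ[F] Fin g × Fin r → F :=
  LinearMap.pi fun p => evalDLinear q (a p.1) (b p.2)

theorem totalEvalLinear_apply (b : Basis (Fin r) Fq F) (a : Fin g → F) (P : F[X]) :
    totalEvalLinear b a P = totalEval q b a P := rfl

theorem coe_map_totalEvalLinear_degreeLT (b : Basis (Fin r) Fq F) (a : Fin g → F) (k : ℕ) :
    ((degreeLT F k).map (totalEvalLinear b a) : Set (Fin g × Fin r → F)) = CodeLRS q b a k := by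
  ext w
  simp [CodeLRS, totalEvalLinear_apply, eq_comm]

variable {b : Basis (Fin r) Fq F} {a : Fin g → F}

theorem card_le_wtv_totalEval_add_natDegree [Finite F] (ha : ∀ j, a j ≠ 0)
    (hconj : PairwiseNonconjugate q a)
    {P : F[X]} (hP : P ≠ 0) : g * r ≤ wtv (totalEval q b a P) + P.natDegree := by
  have hzeros : {p | totalEval q b a P p = 0}.ncard ≤ P.natDegree :=
    (b.linearIndependent.ncard_setOf_apply_eq_zero_le fun j => evalDOp Fq (a j) P).trans
      (sum_finrank_ker_evalDOp_le ha hconj hP)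
  have := wtv_add_ncard_setOf_eq_zero (totalEval q b a P)
  simp only [Nat.card_eq_fintype_card, Fintype.card_prod, Fintype.card_fin] at this
  omega

theorem finrank_map_totalEvalLinear_degreeLT [Finite F] (ha : ∀ j, a j ≠ 0)
    (hconj : PairwiseNonconjugate q a)
    {k : ℕ} (hk : k ≤ g * r) : finrank F ((degreeLT F k).map (totalEvalLinear b a)) = k := by
  have hinj : Function.Injective ((totalEvalLinear b a).domRestrict (degreeLT F k)) := by
    refine (injective_iff_map_eq_zero _).2 ?_
    rintro ⟨P, hPk⟩ hP
    by_contra hne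
    have hP0 : P ≠ 0 := fun h => hne (by simp [h])
    have hdeg := (natDegree_lt_iff_degree_lt hP0).2 (mem_degreeLT.1 hPk)
    have hwt := card_le_wtv_totalEval_add_natDegree (b := b) ha hconj hP0
    rw [← totalEvalLinear_apply, show totalEvalLinear b a P = 0 from hP] at hwt
    simp [wtv] at hwt
    omega
  rw [← LinearMap.range_domRestrict, LinearMap.finrank_range_of_inj hinj,
    (degreeLTEquiv F k).finrank_eq, finrank_fin_fun]

theorem card_lt_wtv_add_of_mem_CodeLRS [Finite F] (ha : ∀ j, a j ≠ 0)
    (hconj : PairwiseNonconjugate q a)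
    {k : ℕ} {w : Fin g × Fin r → F} (hw : w ∈ CodeLRS q b a k) (hw0 : w ≠ 0) :
    g * r < wtv w + k := by
  obtain ⟨P, hPk, rfl⟩ := hw
  have hP0 : P ≠ 0 := by
    rintro rfl
    exact hw0 (by rw [← totalEvalLinear_apply, map_zero])
  have hdeg := (natDegree_lt_iff_degree_lt hP0).2 (mem_degreeLT.1 hPk)
  have := card_le_wtv_totalEval_add_natDegree (b := b) ha hconj hP0
  omega

end Code

section PrimitiveElement

variable {F : Type*} [Field F] [Fintype F] {γ : F}

theorem ne_zero_of_forall_eq_pow (hγ : ∀ x : F, x ≠ 0 → ∃ m : ℕ, x = γ ^ m)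
    (hF : 2 < Fintype.card F) : γ ≠ 0 := by
  classical
  rintro rfl
  have hsub : (Finset.univ : Finset F) ⊆ {0, 1} := fun x _ => by
    obtain rfl | hx := eq_or_ne x 0
    · simp
    · obtain ⟨_ | m, rfl⟩ := hγ x hx <;> simp at hx ⊢
  exact hF.not_ge ((Finset.card_le_card hsub).trans Finset.card_le_two)

theorem orderOf_eq_card_sub_one (hγ : ∀ x : F, x ≠ 0 → ∃ m : ℕ, x = γ ^ m) (hγ0 : γ ≠ 0) :
    orderOf (Units.mk0 γ hγ0) = Fintype.card F - 1 := by
  classical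
  rw [← Fintype.card_units, ← Nat.card_eq_fintype_card]
  refine orderOf_eq_card_of_forall_mem_zpowers fun v => ?_
  obtain ⟨m, hm⟩ := hγ v v.ne_zero
  exact ⟨m, Units.ext (by simp [hm])⟩

theorem pow_mul_pow_ne (hγ : ∀ x : F, x ≠ 0 → ∃ m : ℕ, x = γ ^ m) (hγ0 : γ ≠ 0) {n : ℕ}
    (hn : n ∣ Fintype.card F - 1) {i j : ℕ} (hi : i < n) (hj : j < n) (hij : i ≠ j) {x y : F}
    (hx : x ≠ 0) (hy : y ≠ 0) : γ ^ i * x ^ n ≠ γ ^ j * y ^ n := by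
  obtain ⟨s, rfl⟩ := hγ x hx
  obtain ⟨t, rfl⟩ := hγ y hy
  intro h
  rw [← pow_mul, ← pow_mul, ← pow_add, ← pow_add] at h
  have hu : Units.mk0 γ hγ0 ^ (i + s * n) = Units.mk0 γ hγ0 ^ (j + t * n) := Units.ext (by simpa)
  rw [pow_eq_pow_iff_modEq, orderOf_eq_card_sub_one hγ hγ0] at hu
  have := hu.of_dvd hn
  simp only [Nat.ModEq, Nat.add_mul_mod_self_right, Nat.mod_eq_of_lt hi, Nat.mod_eq_of_lt hj]
    at this
  exact hij this

variable (Fq : Type*) [Field Fq] [Fintype Fq] [Algebra Fq F]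

theorem sub_one_dvd_card_sub_one : Fintype.card Fq - 1 ∣ Fintype.card F - 1 := by
  rw [Module.card_eq_pow_finrank (K := Fq) (V := F)]
  simpa using Nat.sub_dvd_pow_sub_pow (Fintype.card Fq) 1 (finrank Fq F)

theorem ne_zero_of_forall_eq_pow_of_two_lt (hγ : ∀ x : F, x ≠ 0 → ∃ m : ℕ, x = γ ^ m)
    (hq : 2 < Fintype.card Fq) : γ ≠ 0 :=
  ne_zero_of_forall_eq_pow hγ
    (hq.trans_le (Fintype.card_le_of_injective _ (algebraMap Fq F).injective))

variable {Fq}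

theorem pow_ne_zero_of_lt_card (hγ : ∀ x : F, x ≠ 0 → ∃ m : ℕ, x = γ ^ m) {g : ℕ}
    (hgq : g < Fintype.card Fq) (j : Fin g) : γ ^ (j : ℕ) ≠ 0 := by
  rcases Nat.eq_zero_or_pos j with hj | hj
  · simp [hj]
  · exact pow_ne_zero _ (ne_zero_of_forall_eq_pow_of_two_lt Fq hγ (by omega))

theorem pairwiseNonconjugate_pow (hγ : ∀ x : F, x ≠ 0 → ∃ m : ℕ, x = γ ^ m) {g : ℕ}
    (hgq : g < Fintype.card Fq) :
    PairwiseNonconjugate (Fintype.card Fq) fun j : Fin g => γ ^ (j : ℕ) := by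
  intro j j' hjj' x y hx hy
  have hval : (j : ℕ) ≠ j' := Fin.val_ne_of_ne hjj'
  exact pow_mul_pow_ne hγ (ne_zero_of_forall_eq_pow_of_two_lt Fq hγ (by omega))
    (sub_one_dvd_card_sub_one Fq) (by omega) (by omega) hval hx hy

end PrimitiveElement

end LinearizedRS

theorem stmt15_general (q r g k : ℕ) (hgq : g < q)
    (hk : 1 ≤ k) (hkN : k ≤ g * r)
    (Fq F : Type*) [Field Fq] [Fintype Fq] [Field F] [Fintype F] [Algebra Fq F]
    (hq : Fintype.card Fq = q)
    (b : Module.Basis (Fin r) Fq F)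
    (γ : F) (hγ : ∀ x : F, x ≠ 0 → ∃ m : ℕ, x = γ ^ m)
    (a : Fin g → F) (ha : ∀ j : Fin g, a j = γ ^ (j : ℕ)) :
    (∃ S : Submodule F (Fin g × Fin r → F),
        (S : Set (Fin g × Fin r → F)) = CodeLRS q b a k ∧
        Module.finrank F S = k) ∧
    (∀ w ∈ CodeLRS q b a k, w ≠ 0 → g * r - k + 1 ≤ wtv w) ∧
    (∃ w ∈ CodeLRS q b a k, w ≠ 0 ∧ wtv w = g * r - k + 1) := by
  subst hq
  have ha' : a = fun j : Fin g => γ ^ (j : ℕ) := funext ha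
  have ha0 : ∀ j, a j ≠ 0 := ha' ▸ LinearizedRS.pow_ne_zero_of_lt_card hγ hgq
  have hconj : LinearizedRS.PairwiseNonconjugate (Fintype.card Fq) a :=
    ha' ▸ LinearizedRS.pairwiseNonconjugate_pow hγ hgq
  set S := (degreeLT F k).map (LinearizedRS.totalEvalLinear b a)
  have hS := LinearizedRS.coe_map_totalEvalLinear_degreeLT b a k
  have hdim : finrank F S = k := LinearizedRS.finrank_map_totalEvalLinear_degreeLT ha0 hconj hkN
  have hwt : ∀ w ∈ CodeLRS _ b a k, w ≠ 0 → g * r - k + 1 ≤ wtv w := fun w hw hw0 => by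
    have := LinearizedRS.card_lt_wtv_add_of_mem_CodeLRS ha0 hconj hw hw0
    omega
  obtain ⟨w, hwS, hw0, hwle⟩ := S.exists_ne_zero_wtv_add_finrank_le (by omega)
  rw [← SetLike.mem_coe, hS] at hwS
  refine ⟨⟨S, hS, hdim⟩, hwt, w, hwS, hw0, le_antisymm ?_ (hwt w hwS hw0)⟩
  simp only [Fintype.card_prod, Fintype.card_fin, hdim] at hwle
  omega

/-- the linearized Reed-Solomon code C_{N,k}(a,β), with
a = (γ^0,…,γ^{g-1}), γ primitive and q > g, is an F_{q^r}-linear MDS code of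
dimension k and minimum Hamming distance N - k + 1, where N = gr. -/
theorem stmt15 (q r g k : ℕ) (hr : 1 ≤ r) (hg : 1 ≤ g) (hgq : g < q)
    (hk : 1 ≤ k) (hkN : k ≤ g * r)
    (Fq F : Type*) [Field Fq] [Fintype Fq] [Field F] [Fintype F] [Algebra Fq F]
    (hq : Fintype.card Fq = q) (hF : Fintype.card F = q ^ r)
    (b : Module.Basis (Fin r) Fq F)
    (γ : F) (hγ : ∀ x : F, x ≠ 0 → ∃ m : ℕ, x = γ ^ m)
    (a : Fin g → F) (ha : ∀ j : Fin g, a j = γ ^ (j : ℕ)) :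
    (∃ S : Submodule F (Fin g × Fin r → F),
        (S : Set (Fin g × Fin r → F)) = CodeLRS q b a k ∧
        Module.finrank F S = k) ∧
    (∀ w ∈ CodeLRS q b a k, w ≠ 0 → g * r - k + 1 ≤ wtv w) ∧
    (∃ w ∈ CodeLRS q b a k, w ≠ 0 ∧ wtv w = g * r - k + 1) :=
  stmt15_general q r g k hgq hk hkN Fq F hq b γ hγ a ha
end
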